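/- arXiv:1110.0151 — 2 statements merged into one kernel-verified Lean document; each statement's English description precedes it below -/
import Mathlib

section
/- If [E₁, h^{E₁}, [∇^{E₁}]] − [F₁, h^{F₁}, [∇^{F₁}]] = [E₂, h^{E₂}, [∇^{E₂}]] − [F₂, h^{F₂}, [∇^{F₂}]] in K̂_SS(X), then (E₁, h^{E₁}, ∇^{E₁}, 0) − (F₁, h^{F₁}, ∇^{F₁}, 0) = (E₂, h^{E₂}, ∇^{E₂}, 0) − (F₂, h^{F₂}, ∇^{F₂}, 0) in K̂_FL(X); hence the assignment [E, h^E, [∇^E]] − [F, h^F, [∇^F]] ↦ (E, h^E, ∇^E, 0) − (F, h^F, ∇^F, 0) is a well-defined map f : K̂_SS(X) → K̂_FL(X), and f is a ring homomorphism. -/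
/-!
Abstract context encoding the differential-geometric background on a compact
manifold `X` used for Simons–Sullivan and Freed–Lott differential K-theory.

* `Bun`  : Hermitian vector bundles with unitary connection `(E, h, ∇)` over `X`.
* `Odd`  : `Ω^odd(X; ℝ)/im d`, odd differential forms modulo exact forms.
* `Even` : even differential forms on `X`.
* `KSS`  : the Simons–Sullivan differential K-group `K̂_SS(X)`.
* `KFL`  : the Freed–Lott differential K-group `K̂_FL(X)`.
-/
structure DKCtx (Bun Odd Even KSS KFL : Type)
    [AddCommGroup Odd] [AddCommGroup Even] [CommRing KSS] [CommRing KFL] where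
  /-- direct sum of Hermitian bundles with connection -/
  dsum : Bun → Bun → Bun
  /-- tensor product of Hermitian bundles with connection -/
  tens : Bun → Bun → Bun
  /-- rank of the underlying bundle -/
  rank : Bun → ℕ
  /-- `triv n` : the trivial bundle of rank `n` with trivial metric and trivial flat connection -/
  triv : ℕ → Bun
  /-- the connection is flat -/
  Flat : Bun → Prop
  flat_triv : ∀ n, Flat (triv n)
  /-- isomorphism of the underlying Hermitian vector bundles (ignoring connections) -/
  Iso : Bun → Bun → Prop
  iso_refl : ∀ a, Iso a a
  iso_symm : ∀ {a b}, Iso a b → Iso b a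
  iso_trans : ∀ {a b c}, Iso a b → Iso b c → Iso a c
  iso_dsum : ∀ {a b a' b'}, Iso a b → Iso a' b' → Iso (dsum a a') (dsum b b')
  iso_comm : ∀ a b, Iso (dsum a b) (dsum b a)
  iso_assoc : ∀ a b c, Iso (dsum (dsum a b) c) (dsum a (dsum b c))
  rank_dsum : ∀ a b, rank (dsum a b) = rank a + rank b
  rank_triv : ∀ n, rank (triv n) = n
  rank_iso : ∀ {a b}, Iso a b → rank a = rank b
  /-- Chern–Simons transgression form `CS(∇^a, ∇^b) ∈ Ω^odd(X)/im d` (meaningful when the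
  underlying bundles are isomorphic; extended arbitrarily otherwise). -/
  CS : Bun → Bun → Odd
  CS_cocycle : ∀ a b c, CS a c = CS a b + CS b c
  CS_dsum : ∀ a b a' b', CS (dsum a a') (dsum b b') = CS a b + CS a' b'
  CS_swap : ∀ a b, CS (dsum a b) (dsum b a) = 0
  CS_assoc : ∀ a b c, CS (dsum (dsum a b) c) (dsum a (dsum b c)) = 0
  /-- the exterior derivative `d : Ω^odd/im d → Ω^even` -/
  der : Odd →+ Even
  /-- the Chern character form `ch(∇)` -/
  ch : Bun → Even
  ch_dsum : ∀ a b, ch (dsum a b) = ch a + ch b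
  /-- `d CS(∇⁰, ∇¹) = ch(∇¹) − ch(∇⁰)` -/
  der_CS : ∀ {a b}, Iso a b → der (CS a b) = ch b - ch a
  /-- the structured-bundle class `[E, h, [∇]] ∈ K̂_SS(X)` -/
  ssCl : Bun → KSS
  ssCl_add : ∀ a b, ssCl (dsum a b) = ssCl a + ssCl b
  ssCl_mul : ∀ a b, ssCl (tens a b) = ssCl a * ssCl b
  ssCl_one : ssCl (triv 1) = 1
  /-- every class in `K̂_SS(X)` is a difference of structured-bundle classes -/
  ssCl_surj : ∀ x : KSS, ∃ a b, x = ssCl a - ssCl b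
  /-- `[𝒱₁] − [𝒲₁] = [𝒱₂] − [𝒲₂]` in `K̂_SS(X)` iff there is `G` with
  `V₁ ⊕ W₂ ⊕ G ≅ W₁ ⊕ V₂ ⊕ G` and `CS(∇^{V₁} ⊕ ∇^{W₂} ⊕ ∇^G, ∇^{V₂} ⊕ ∇^{W₁} ⊕ ∇^G) = 0` -/
  ssCl_eq_iff : ∀ a b a' b', (ssCl a - ssCl b = ssCl a' - ssCl b') ↔
      ∃ G, Iso (dsum (dsum a b') G) (dsum (dsum b a') G) ∧
        CS (dsum (dsum a b') G) (dsum (dsum a' b) G) = 0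
  /-- the generator `(E, h, ∇, φ) ∈ K̂_FL(X)` -/
  flCl : Bun → Odd → KFL
  flCl_add : ∀ a φ b ψ, flCl (dsum a b) (φ + ψ) = flCl a φ + flCl b ψ
  flCl_mul : ∀ a b, flCl (tens a b) 0 = flCl a 0 * flCl b 0
  flCl_one : flCl (triv 1) 0 = 1
  /-- every class in `K̂_FL(X)` is a difference of generators -/
  flCl_surj : ∀ x : KFL, ∃ a φ b, x = flCl a φ - flCl b 0
  /-- `(E₁, h₁, ∇₁, φ₁) = (E₂, h₂, ∇₂, φ₂)` in `K̂_FL(X)` iff there is `F` with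
  `E₁ ⊕ F ≅ E₂ ⊕ F` and `φ₁ − φ₂ = CS(∇₂ ⊕ ∇^F, ∇₁ ⊕ ∇^F)` -/
  flCl_eq_iff : ∀ a φ b ψ, flCl a φ = flCl b ψ ↔
      ∃ F, Iso (dsum a F) (dsum b F) ∧ φ - ψ = CS (dsum b F) (dsum a F)
  /-- the subgroup `Ω_U(X) = {g*(Θ) + dβ} ⊆ Ω^odd(X)`, viewed inside `Ω^odd(X)/im d` -/
  OmegaU : AddSubgroup Odd
  /-- forms in `Ω_U(X)` are closed -/
  der_OmegaU : ∀ ψ ∈ OmegaU, der ψ = 0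
  /-- a representative of `ĈS(𝒱) ∈ Ω^odd(X)/Ω_U(X)` (meaningful for stably trivial `𝒱`) -/
  CShat : Bun → Odd
  /-- `ĈS(𝒱) := CS(∇^V ⊕ ∇^F, ∇^H) mod Ω_U(X)` for trivial bundles `F`, `H` with flat
  connections and `V ⊕ F ≅ H` -/
  CShat_spec : ∀ V F H, Flat F → Flat H → (∃ k, Iso F (triv k)) → (∃ m, Iso H (triv m)) →
      Iso (dsum V F) H → CShat V - CS (dsum V F) H ∈ OmegaU
  /-- Venice lemma: surjectivity of `ĈS : st_ST(X)/st_SF(X) → Ω^odd(X)/Ω_U(X)` -/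
  CShat_surj : ∀ φ : Odd, ∃ V, (∃ k m, Iso (dsum V (triv k)) (triv m)) ∧ CShat V - φ ∈ OmegaU
  /-- Venice lemma: injectivity of `ĈS`, i.e. its kernel consists of the stably flat bundles -/
  CShat_ker : ∀ V, (∃ k m, Iso (dsum V (triv k)) (triv m)) →
      (CShat V ∈ OmegaU ↔ ∃ F H, Flat F ∧ Flat H ∧ Iso (dsum V F) H ∧ CS (dsum V F) H = 0)

namespace DKCtx

variable {Bun Odd Even KSS KFL : Type}
  [AddCommGroup Odd] [AddCommGroup Even] [CommRing KSS] [CommRing KFL]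

/-- `𝒱 ∈ st_ST(X)` : the underlying bundle is stably trivial. -/
def StTriv (C : DKCtx Bun Odd Even KSS KFL) (V : Bun) : Prop :=
  ∃ k m, C.Iso (C.dsum V (C.triv k)) (C.triv m)

/-- `𝒱 ∈ st_SF(X)` : `𝒱` is stably flat, i.e. `𝒱 ⊕ ℱ ≅ ℋ` as structured bundles for some
flat structured bundles `ℱ`, `ℋ`. -/
def StFlat (C : DKCtx Bun Odd Even KSS KFL) (V : Bun) : Prop :=
  ∃ F H, C.Flat F ∧ C.Flat H ∧ C.Iso (C.dsum V F) H ∧ C.CS (C.dsum V F) H = 0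

/-- `f([E, h^E, [∇^E]]) = (E, h^E, ∇^E, 0)` : the defining property of the map
`f : K̂_SS(X) → K̂_FL(X)` on generators. -/
def FSpec (C : DKCtx Bun Odd Even KSS KFL) (f : KSS → KFL) : Prop :=
  ∀ a, f (C.ssCl a) = C.flCl a 0

/-- `g(E, h^E, ∇^E, φ) = [E, h^E, [∇^E]] + [V, h^V, [∇^V]] − [dim(V), h, [d]]` for any
`(V, h^V, [∇^V]) ∈ ĈS⁻¹(φ)` : the defining property of `g : K̂_FL(X) → K̂_SS(X)`. -/
def GSpec (C : DKCtx Bun Odd Even KSS KFL) (g : KFL → KSS) : Prop :=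
  ∀ a φ V, C.StTriv V → C.CShat V - φ ∈ C.OmegaU →
    g (C.flCl a φ) = C.ssCl a + C.ssCl V - C.ssCl (C.triv (C.rank V))

/-! The relation defining `K̂_SS(X)` supplies a bundle `G` with `E₁ ⊕ F₂ ⊕ G ≅ E₂ ⊕ F₁ ⊕ G` and
vanishing Chern–Simons form between the two connections. Since `CS` is antisymmetric, the same `G`
witnesses `(E₁ ⊕ F₂, 0) = (E₂ ⊕ F₁, 0)` in `K̂_FL(X)`, and additivity of the generators turns this
into the equality of differences. Hence `f` is well defined on the differences `[E] − [F]` that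
exhaust `K̂_SS(X)`; since both kinds of classes are additive under `⊕` and multiplicative under
`⊗`, `f` respects sums and products. -/

section Transfer

variable (C : DKCtx Bun Odd Even KSS KFL)

theorem CS_self (a : Bun) : C.CS a a = 0 :=
  left_eq_add.mp (C.CS_cocycle a a a)

theorem CS_symm (a b : Bun) : C.CS b a = -C.CS a b := by
  have h := C.CS_cocycle a b a
  rw [C.CS_self] at h
  exact eq_neg_of_add_eq_zero_right h.symm

theorem flCl_dsum_zero (a b : Bun) : C.flCl (C.dsum a b) 0 = C.flCl a 0 + C.flCl b 0 := by
  simpa using C.flCl_add a 0 b 0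

theorem flCl_dsum_eq_of_ssCl_sub_eq {a b a' b' : Bun}
    (h : C.ssCl a - C.ssCl b = C.ssCl a' - C.ssCl b') :
    C.flCl (C.dsum a b') 0 = C.flCl (C.dsum a' b) 0 := by
  obtain ⟨G, hIso, hCS⟩ := (C.ssCl_eq_iff a b a' b').mp h
  refine (C.flCl_eq_iff _ 0 _ 0).mpr ⟨G, ?_, ?_⟩
  · exact C.iso_trans hIso (C.iso_dsum (C.iso_comm b a') (C.iso_refl G))
  · rw [C.CS_symm, hCS, sub_self, neg_zero]

theorem flCl_sub_eq_of_ssCl_sub_eq {a b a' b' : Bun}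
    (h : C.ssCl a - C.ssCl b = C.ssCl a' - C.ssCl b') :
    C.flCl a 0 - C.flCl b 0 = C.flCl a' 0 - C.flCl b' 0 := by
  have hsum := C.flCl_dsum_eq_of_ssCl_sub_eq h
  rw [C.flCl_dsum_zero, C.flCl_dsum_zero] at hsum
  linear_combination hsum

/-- The paper's `f`, evaluated on an arbitrarily chosen presentation `x = [E] − [F]`. -/
noncomputable def ssToFL (x : KSS) : KFL :=
  C.flCl (C.ssCl_surj x).choose 0 - C.flCl (C.ssCl_surj x).choose_spec.choose 0

theorem ssToFL_ssCl_sub (a b : Bun) :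
    C.ssToFL (C.ssCl a - C.ssCl b) = C.flCl a 0 - C.flCl b 0 :=
  C.flCl_sub_eq_of_ssCl_sub_eq (C.ssCl_surj _).choose_spec.choose_spec.symm

theorem ssToFL_ssCl (a : Bun) : C.ssToFL (C.ssCl a) = C.flCl a 0 := by
  have h : C.ssCl a = C.ssCl (C.dsum a (C.triv 1)) - C.ssCl (C.triv 1) := by
    rw [C.ssCl_add, add_sub_cancel_right]
  rw [h, ssToFL_ssCl_sub, flCl_dsum_zero, add_sub_cancel_right]

theorem ssToFL_add (x y : KSS) : C.ssToFL (x + y) = C.ssToFL x + C.ssToFL y := by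
  obtain ⟨a, b, rfl⟩ := C.ssCl_surj x
  obtain ⟨a', b', rfl⟩ := C.ssCl_surj y
  have hsum : C.ssCl a - C.ssCl b + (C.ssCl a' - C.ssCl b') =
      C.ssCl (C.dsum a a') - C.ssCl (C.dsum b b') := by
    rw [C.ssCl_add, C.ssCl_add]; ring
  rw [hsum]
  simp only [ssToFL_ssCl_sub, flCl_dsum_zero]
  ring

theorem ssToFL_mul (x y : KSS) : C.ssToFL (x * y) = C.ssToFL x * C.ssToFL y := by
  obtain ⟨a, b, rfl⟩ := C.ssCl_surj x
  obtain ⟨a', b', rfl⟩ := C.ssCl_surj y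
  have hprod : (C.ssCl a - C.ssCl b) * (C.ssCl a' - C.ssCl b') =
      C.ssCl (C.dsum (C.tens a a') (C.tens b b')) -
        C.ssCl (C.dsum (C.tens a b') (C.tens b a')) := by
    simp only [C.ssCl_add, C.ssCl_mul]; ring
  rw [hprod]
  simp only [ssToFL_ssCl_sub, flCl_dsum_zero, C.flCl_mul]
  ring

noncomputable def ssToFLRingHom : KSS →+* KFL where
  toFun := C.ssToFL
  map_one' := by rw [← C.ssCl_one, ssToFL_ssCl, C.flCl_one]
  map_zero' := by simpa using C.ssToFL_ssCl_sub (C.triv 0) (C.triv 0)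
  map_add' := C.ssToFL_add
  map_mul' := C.ssToFL_mul

end Transfer

end DKCtx

/-- If `[E₁] − [F₁] = [E₂] − [F₂]` in `K̂_SS(X)` then
`(E₁, 0) − (F₁, 0) = (E₂, 0) − (F₂, 0)` in `K̂_FL(X)`; hence
`[E, h^E, [∇^E]] − [F, h^F, [∇^F]] ↦ (E, h^E, ∇^E, 0) − (F, h^F, ∇^F, 0)` is a
well-defined map `f : K̂_SS(X) → K̂_FL(X)`, and `f` is a ring homomorphism. -/
theorem stmt1_f_well_defined_ring_hom
    (Bun Odd Even KSS KFL : Type) [AddCommGroup Odd] [AddCommGroup Even]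
    [CommRing KSS] [CommRing KFL] (C : DKCtx Bun Odd Even KSS KFL) :
    (∀ E₁ F₁ E₂ F₂ : Bun,
        C.ssCl E₁ - C.ssCl F₁ = C.ssCl E₂ - C.ssCl F₂ →
        C.flCl E₁ 0 - C.flCl F₁ 0 = C.flCl E₂ 0 - C.flCl F₂ 0) ∧
    (∃ f : KSS →+* KFL, C.FSpec f) :=
  ⟨fun _ _ _ _ => C.flCl_sub_eq_of_ssCl_sub_eq, C.ssToFLRingHom, C.ssToFL_ssCl⟩
end

section
/- The diagram relating the exact sequences 0 → K⁻¹_SS(X; ℝ/ℤ) → K̂_SS(X) →^{ch_{K̂_SS}} Ω_BU(X) → 0 and 0 → K⁻¹_L(X; ℝ/ℤ) → K̂_FL(X) →^{ω} Ω_BU(X) → 0 commutes: ω ∘ f = ch_{K̂_SS}, where ω(E, h^E, ∇^E, φ) := ch(∇^E) + dφ, and the restriction f̄ of the ring isomorphism f : K̂_SS(X) → K̂_FL(X) to the flat part K⁻¹_SS(X; ℝ/ℤ) = ker(ch_{K̂_SS}) is an isomorphism onto K⁻¹_L(X; ℝ/ℤ) = ker(ω). -/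
namespace DKCtx

variable {Bun Odd Even KSS KFL : Type}
  [AddCommGroup Odd] [AddCommGroup Even] [CommRing KSS] [CommRing KFL]
  {C : DKCtx Bun Odd Even KSS KFL}

theorem FSpec.omega_apply_eq_ch {F : Type*} [FunLike F KSS KFL] [AddMonoidHomClass F KSS KFL]
    {f : F} (hf : C.FSpec f) {chSS : KSS →+ Even} (hchSS : ∀ a, chSS (C.ssCl a) = C.ch a)
    {ωFL : KFL →+ Even} (hωFL : ∀ a φ, ωFL (C.flCl a φ) = C.ch a + C.der φ) (x : KSS) :
    ωFL (f x) = chSS x := by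
  obtain ⟨a, b, rfl⟩ := C.ssCl_surj x
  rw [map_sub, map_sub, map_sub, hf a, hf b, hωFL, hωFL, hchSS, hchSS, map_zero, add_zero,
    add_zero]

end DKCtx

/-- The diagram relating the exact sequences
`0 → K⁻¹_SS(X; ℝ/ℤ) → K̂_SS(X) → Ω_BU(X) → 0` and
`0 → K⁻¹_L(X; ℝ/ℤ) → K̂_FL(X) → Ω_BU(X) → 0` commutes: `ω ∘ f = ch_{K̂_SS}`, where
`ω(E, h^E, ∇^E, φ) = ch(∇^E) + dφ` and `ch_{K̂_SS}` is the Chern character form map;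
and the restriction `f̄` of the ring isomorphism `f` to the flat part
`K⁻¹_SS(X; ℝ/ℤ) = ker(ch_{K̂_SS})` is an isomorphism onto `K⁻¹_L(X; ℝ/ℤ) = ker(ω)`. -/
theorem stmt7_flat_parts_iso
    (Bun Odd Even KSS KFL : Type) [AddCommGroup Odd] [AddCommGroup Even]
    [CommRing KSS] [CommRing KFL] (C : DKCtx Bun Odd Even KSS KFL)
    -- `f : K̂_SS(X) → K̂_FL(X)` is the ring isomorphism of Theorem 1
    (f : KSS →+* KFL) (hf : C.FSpec f) (hfbij : Function.Bijective f)
    -- `ch_{K̂_SS} : K̂_SS(X) → Ω^even_BU(X)`, `ch_{K̂_SS}([𝒱] − [𝒲]) = ch(∇^V) − ch(∇^W)`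
    (chSS : KSS →+ Even) (hchSS : ∀ a, chSS (C.ssCl a) = C.ch a)
    -- `ω : K̂_FL(X) → Ω^even_BU(X)`, `ω(E, h^E, ∇^E, φ) = ch(∇^E) + dφ`
    (ωFL : KFL →+ Even) (hωFL : ∀ a φ, ωFL (C.flCl a φ) = C.ch a + C.der φ) :
    (∀ x : KSS, ωFL (f x) = chSS x) ∧
    Set.BijOn f {x : KSS | chSS x = 0} {y : KFL | ωFL y = 0} := by
  have hcomm : ∀ x : KSS, ωFL (f x) = chSS x := hf.omega_apply_eq_ch hchSS hωFL
  have hker : {x : KSS | chSS x = 0} = f ⁻¹' {y : KFL | ωFL y = 0} := by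
    ext x
    simp only [Set.mem_ofPred_eq, Set.mem_preimage, hcomm]
  exact ⟨hcomm, hker ▸ hfbij.bijOn_preimage⟩
end
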